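/- Expected Knight identity: let ε be a real-valued random variable on a probability space with distribution function F(s) = P(ε ≤ s). If F(0) = τ and P(ε < 0) = τ (i.e., P(ε = 0) = 0), then for every t ∈ ℝ the difference ρ_τ(ε − t) − ρ_τ(ε) is integrable and E[ρ_τ(ε − t) − ρ_τ(ε)] = ∫₀^t (F(s) − τ) ds, the signed integral from 0 to t. -/

import Mathlib

open MeasureTheory

/-- The quantile check loss `ρ_τ(u) = u (τ − 𝟙{u<0})`. -/
noncomputable def check (τ u : ℝ) : ℝ := u * (τ - if u < 0 then 1 else 0)

lemma check_key (τ u t : ℝ) :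
    check τ (u - t) - check τ u = -(τ * t) + (max (t - u) 0 - max (-u) 0) := by
  simp only [check, max_def]
  split_ifs <;> ring_nf <;> linarith

lemma toReal_ofReal' (a : ℝ) : (ENNReal.ofReal a).toReal = max a 0 := by
  rcases le_total 0 a with h | h
  · rw [ENNReal.toReal_ofReal h, max_eq_left h]
  · rw [ENNReal.ofReal_eq_zero.2 h, max_eq_right h]; simp

lemma vol_inter (u a b : ℝ) :
    MeasureTheory.volume (Set.Ici u ∩ Set.Ioc a b) = ENNReal.ofReal (b - max u a) := by
  apply le_antisymm
  · calc MeasureTheory.volume (Set.Ici u ∩ Set.Ioc a b)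
        ≤ MeasureTheory.volume (Set.Icc (max u a) b) := by
          apply measure_mono
          rintro x ⟨h1, h2, h3⟩
          exact ⟨max_le h1 h2.le, h3⟩
      _ = ENNReal.ofReal (b - max u a) := Real.volume_Icc
  · rw [← Real.volume_Ioc]
    apply measure_mono
    rintro x ⟨h1, h2⟩
    exact ⟨(le_max_left u a).trans_lt h1 |>.le, (le_max_right u a).trans_lt h1, h2⟩

lemma set_ind_integral (u a b : ℝ) :
    (∫ s in Set.Ioc a b, (if u ≤ s then (1:ℝ) else 0)) = max (b - max u a) 0 := by
  have h1 : (fun s : ℝ => if u ≤ s then (1:ℝ) else 0)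
      = Set.indicator (Set.Ici u) (fun _ => (1:ℝ)) := by
    funext s; simp [Set.indicator_apply, Set.mem_Ici]
  rw [h1, MeasureTheory.integral_indicator_const (1:ℝ) measurableSet_Ici, measureReal_def,
    Measure.restrict_apply measurableSet_Ici, vol_inter, smul_eq_mul, mul_one, toReal_ofReal']

lemma ind_integral (u t : ℝ) :
    (∫ s in (0:ℝ)..t, (if u ≤ s then (1:ℝ) else 0)) = max (t - u) 0 - max (-u) 0 := by
  rcases le_total 0 t with h | h
  · rw [intervalIntegral.integral_of_le h, set_ind_integral]
    simp only [max_def]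
    split_ifs <;> linarith
  · rw [intervalIntegral.integral_of_ge h, set_ind_integral]
    simp only [max_def]
    split_ifs <;> linarith

lemma fubini_ind {Ω : Type*} [MeasurableSpace Ω] (μ : Measure Ω)
    [IsProbabilityMeasure μ] (ε : Ω → ℝ) (hε : Measurable ε) (a b : ℝ) :
    ∫ ω, (∫ s in Set.Ioc a b, (if ε ω ≤ s then (1:ℝ) else 0)) ∂μ
      = ∫ s in Set.Ioc a b, (μ {ω | ε ω ≤ s}).toReal := by
  haveI : IsFiniteMeasure (MeasureTheory.volume.restrict (Set.Ioc a b)) :=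
    ⟨by rw [Measure.restrict_apply_univ]; exact measure_Ioc_lt_top⟩
  have hA : MeasurableSet {p : Ω × ℝ | ε p.1 ≤ p.2} :=
    measurableSet_le (hε.comp measurable_fst) measurable_snd
  have hint : Integrable (Function.uncurry fun ω s => if ε ω ≤ s then (1:ℝ) else 0)
      (μ.prod (MeasureTheory.volume.restrict (Set.Ioc a b))) := by
    have h1 : (Function.uncurry fun ω s => if ε ω ≤ s then (1:ℝ) else 0)
        = Set.indicator {p : Ω × ℝ | ε p.1 ≤ p.2} (fun _ => 1) := by
      funext p; simp [Function.uncurry, Set.indicator_apply]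
    rw [h1, integrable_indicator_iff hA]
    exact integrableOn_const (measure_lt_top _ _).ne
  rw [MeasureTheory.integral_integral_swap hint]
  refine integral_congr_ae (Filter.Eventually.of_forall fun s => ?_)
  show ∫ ω, (if ε ω ≤ s then (1:ℝ) else 0) ∂μ = (μ {ω | ε ω ≤ s}).toReal
  have h2 : (fun ω => if ε ω ≤ s then (1:ℝ) else 0)
      = Set.indicator {ω | ε ω ≤ s} (fun _ => 1) := by
    funext ω; simp [Set.indicator_apply]
  rw [h2, MeasureTheory.integral_indicator_const (1:ℝ) (measurableSet_le hε measurable_const),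
    smul_eq_mul, mul_one, measureReal_def]

/-- Expected Knight identity: if `F(0) = τ` and `P(ε < 0) = τ` (i.e. `P(ε = 0) = 0`), then
`ρ_τ(ε − t) − ρ_τ(ε)` is integrable and its expectation equals `∫₀^t (F(s) − τ) ds`. -/
theorem expected_knight {Ω : Type*} [MeasurableSpace Ω] (μ : Measure Ω)
    [IsProbabilityMeasure μ] (ε : Ω → ℝ) (hε : Measurable ε)
    (τ : ℝ) (hτ : τ ∈ Set.Ioo (0 : ℝ) 1)
    (F : ℝ → ℝ) (hF : ∀ s, F s = (μ {ω | ε ω ≤ s}).toReal)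
    (hF0 : F 0 = τ) (hlt : (μ {ω | ε ω < 0}).toReal = τ) (t : ℝ) :
    Integrable (fun ω => check τ (ε ω - t) - check τ (ε ω)) μ ∧
      ∫ ω, (check τ (ε ω - t) - check τ (ε ω)) ∂μ
        = ∫ s in (0 : ℝ)..t, (F s - τ) := by
  set g : Ω → ℝ := fun ω => max (t - ε ω) 0 - max (-ε ω) 0 with hg_def
  have hkey : (fun ω => check τ (ε ω - t) - check τ (ε ω))
      = fun ω => -(τ * t) + g ω := by
    funext ω; exact check_key τ (ε ω) t
  have hg_meas : Measurable g :=
    ((measurable_const.sub hε).max measurable_const).sub (hε.neg.max measurable_const)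
  have hg_bound : ∀ ω, ‖g ω‖ ≤ |t| := by
    intro ω
    rw [Real.norm_eq_abs, abs_le]
    constructor <;> (simp only [hg_def, max_def, abs_le]) <;> split_ifs <;>
      rcases abs_cases t with ⟨h1, h2⟩ | ⟨h1, h2⟩ <;> linarith
  have hg_int : Integrable g μ :=
    Integrable.mono' (integrable_const |t|) hg_meas.aestronglyMeasurable
      (Filter.Eventually.of_forall hg_bound)
  have hint : Integrable (fun ω => check τ (ε ω - t) - check τ (ε ω)) μ := by
    rw [hkey]; exact (integrable_const _).add hg_int
  refine ⟨hint, ?_⟩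
  -- F is monotone, hence interval integrable
  have hFmono : Monotone F := by
    intro s s' hss
    rw [hF, hF]
    exact ENNReal.toReal_mono (measure_ne_top _ _)
      (measure_mono fun ω hω => le_trans hω hss)
  have hFint : IntervalIntegrable F MeasureTheory.volume 0 t :=
    hFmono.intervalIntegrable
  -- compute the integral
  have hEg : ∫ ω, g ω ∂μ = ∫ s in (0:ℝ)..t, F s := by
    have hg_eq : ∀ ω, g ω = ∫ s in (0:ℝ)..t, (if ε ω ≤ s then (1:ℝ) else 0) :=
      fun ω => (ind_integral (ε ω) t).symm
    rcases le_total 0 t with h | h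
    · calc ∫ ω, g ω ∂μ
          = ∫ ω, (∫ s in Set.Ioc 0 t, (if ε ω ≤ s then (1:ℝ) else 0)) ∂μ := by
            refine integral_congr_ae (Filter.Eventually.of_forall fun ω => ?_)
            rw [hg_eq ω, intervalIntegral.integral_of_le h]
        _ = ∫ s in Set.Ioc 0 t, (μ {ω | ε ω ≤ s}).toReal := fubini_ind μ ε hε 0 t
        _ = ∫ s in (0:ℝ)..t, F s := by
            rw [intervalIntegral.integral_of_le h]
            exact integral_congr_ae (Filter.Eventually.of_forall fun s => (hF s).symm)
    · calc ∫ ω, g ω ∂μ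
          = ∫ ω, -(∫ s in Set.Ioc t 0, (if ε ω ≤ s then (1:ℝ) else 0)) ∂μ := by
            refine integral_congr_ae (Filter.Eventually.of_forall fun ω => ?_)
            rw [hg_eq ω, intervalIntegral.integral_of_ge h]
        _ = -∫ s in Set.Ioc t 0, (μ {ω | ε ω ≤ s}).toReal := by
            rw [integral_neg, fubini_ind μ ε hε t 0]
        _ = ∫ s in (0:ℝ)..t, F s := by
            rw [intervalIntegral.integral_of_ge h, neg_inj]
            exact integral_congr_ae (Filter.Eventually.of_forall fun s => (hF s).symm)
  rw [hkey, integral_add (integrable_const _) hg_int, integral_const, hEg,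
    intervalIntegral.integral_sub hFint intervalIntegrable_const,
    intervalIntegral.integral_const]
  simp [measure_univ]
  ring
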